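/- Fix n ≥ 2, prices p, q ≥ 0, and let v_1,…,v_n be i.i.d. random variables with CDF F and density f. Define F*_p(q) := P[v_n - q < max_{i≤n-1}(v_i - p)], g_p(q,x) := (n-1)·f(x-q+p)·F(x-q+p)^{n-2}, and M := max{0, q-p}. Then F*_p(q) = ∫_M^∞ F(x)·g_p(q,x) dx, and 1 - F*_p(q) = ∫_M^∞ (1-F(x))·g_p(q,x) dx + F(M+p-q)^{n-1}. -/

import Mathlib

open MeasureTheory Set Filter

/-- `FstarS μ n hn p q` is the probability that a consumer with values `v_1, …, v_n`
drawn i.i.d. from `μ` does *not* buy from provider `n` (index `n-1`), when provider `n`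
sets price `q` and all other providers set price `p`:
`F*_p(q) = P[v_n - q < max_{i ≤ n-1} (v_i - p)]`. -/
noncomputable def FstarS (μ : Measure ℝ) (n : ℕ) (hn : 0 < n) (p q : ℝ) : ℝ :=
  ((Measure.pi fun _ : Fin n => μ)
    {v : Fin n → ℝ | v ⟨n - 1, Nat.sub_lt hn Nat.one_pos⟩ - q <
      ⨆ j : {j : Fin n // j ≠ ⟨n - 1, Nat.sub_lt hn Nat.one_pos⟩}, (v j.1 - p)}).toReal

/-! Let `Y` be the largest of the first `n - 1` values. The consumer avoids provider `n` exactly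
when `v_n < Y + (q - p)`, so, `F` being continuous (no atoms), `F*_p(q) = E[F(Y + q - p)]`. The
law of `Y` has CDF `F^(n-1)`, hence density `(n-1) f F^(n-2)` on `(0, ∞)`; the substitution
`x = y + q - p` gives the first formula, where `x ≤ 0` contributes nothing because `F` vanishes
there. The second follows from the first since `∫_M^∞ g_p(q,x) dx = 1 - F(M + p - q)^(n-1)`
by the fundamental theorem of calculus. -/

open ProbabilityTheory
open scoped ENNReal

lemma nullSingletonClass_of_continuous_cdf {μ : Measure ℝ} [IsProbabilityMeasure μ]
    (h : Continuous (cdf μ)) : NullSingletonClass μ where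
  measure_singleton x := by
    rw [← measure_cdf μ, StieltjesFunction.measure_singleton,
      h.continuousWithinAt.leftLim_eq, sub_self, ENNReal.ofReal_zero]

lemma measureReal_Iio_eq_of_continuous_cdf {μ : Measure ℝ} [IsProbabilityMeasure μ] {F : ℝ → ℝ}
    (hcdf : ∀ x, μ.real (Iic x) = F x) (hcont : Continuous F) (x : ℝ) :
    μ.real (Iio x) = F x := by
  have : cdf μ = F := funext fun x => (cdf_eq_real μ x).trans (hcdf x)
  have := nullSingletonClass_of_continuous_cdf (this ▸ hcont)
  rw [measureReal_congr Iio_ae_eq_Iic, hcdf]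

lemma eq_withDensity_of_hasDerivAt_cdf {ν : Measure ℝ} [IsProbabilityMeasure ν] {G g : ℝ → ℝ}
    (hcdf : ∀ x, ν (Iic x) = ENNReal.ofReal (G x)) (hG0 : G 0 = 0)
    (hderiv : ∀ x ∈ Ici 0, HasDerivAt G (g x) x) (hg : ∀ x ∈ Ici 0, 0 ≤ g x) :
    ν = (volume.restrict (Ioi 0)).withDensity fun x => ENNReal.ofReal (g x) := by
  refine Measure.ext_of_Iic _ _ fun a => ?_
  rw [withDensity_apply _ measurableSet_Iic, Measure.restrict_restrict measurableSet_Iic]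
  rcases le_or_gt a 0 with ha | ha
  · have hν : ν (Iic a) = 0 :=
      measure_mono_null (Iic_subset_Iic.2 ha) (by rw [hcdf, hG0, ENNReal.ofReal_zero])
    rw [hν, Iic_inter_Ioi, Ioc_eq_empty (not_lt.2 ha), Measure.restrict_empty,
      lintegral_zero_measure]
  · have hcont : ContinuousOn G (Icc 0 a) := fun x hx =>
      (hderiv x hx.1).continuousAt.continuousWithinAt
    have hint : IntegrableOn g (Ioc 0 a) := intervalIntegral.integrableOn_deriv_of_nonneg hcont
      (fun x hx => hderiv x hx.1.le) fun x hx => hg x hx.1.le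
    have hFTC : ∫ x in Ioc 0 a, g x = G a := by
      rw [← intervalIntegral.integral_of_le ha.le,
        intervalIntegral.integral_eq_sub_of_hasDerivAt_of_le ha.le hcont
          (fun x hx => hderiv x hx.1.le)
          ((intervalIntegrable_iff_integrableOn_Ioc_of_le ha.le).2 hint), hG0, sub_zero]
    rw [hcdf, Iic_inter_Ioi, ← hFTC, ofReal_integral_eq_lintegral_ofReal hint
      ((ae_restrict_iff' measurableSet_Ioc).2 (ae_of_all _ fun x hx => hg x hx.1.le))]

lemma map_iSup_pi_apply_Iic {ι : Type*} [Fintype ι] [Nonempty ι] (μ : Measure ℝ)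
    [SigmaFinite μ] (x : ℝ) :
    (Measure.pi fun _ : ι => μ).map (fun w => ⨆ i, w i) (Iic x) =
      μ (Iic x) ^ Fintype.card ι := by
  have hmax : Measurable fun w : ι → ℝ => ⨆ i, w i := .iSup fun i => measurable_pi_apply i
  have hpre : (fun w : ι → ℝ => ⨆ i, w i) ⁻¹' Iic x = univ.pi fun _ => Iic x := by
    ext w
    simp only [mem_preimage, mem_Iic, mem_univ_pi]
    exact ciSup_le_iff (finite_range w).bddAbove
  rw [Measure.map_apply hmax measurableSet_Iic, hpre, Measure.pi_pi, Finset.prod_const,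
    Finset.card_univ]

/-- Density of the maximum of `m` i.i.d. samples; the paper's `g_p(q, x)` is
`maxDensity (n - 1) F f (x - (q - p))`. -/
def maxDensity (m : ℕ) (F f : ℝ → ℝ) (x : ℝ) : ℝ := m * f x * F x ^ (m - 1)

lemma maxDensity_nonneg {m : ℕ} {F f : ℝ → ℝ} {x : ℝ} (hF : 0 ≤ F x) (hf : 0 ≤ f x) :
    0 ≤ maxDensity m F f x := by
  unfold maxDensity
  positivity

lemma HasDerivAt.pow_maxDensity {F f : ℝ → ℝ} {x : ℝ} (hF : HasDerivAt F (f x) x) (m : ℕ) :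
    HasDerivAt (fun x => F x ^ m) (maxDensity m F f x) x := by
  rw [maxDensity, mul_right_comm]
  exact hF.fun_pow m

lemma map_iSup_pi_eq_withDensity {ι : Type*} [Fintype ι] [Nonempty ι] {μ : Measure ℝ}
    [IsProbabilityMeasure μ] {F f : ℝ → ℝ} (hcdf : ∀ x, μ.real (Iic x) = F x) (hF0 : F 0 = 0)
    (hderiv : ∀ x ∈ Ici 0, HasDerivAt F (f x) x) (hf : ∀ x ∈ Ici 0, 0 ≤ f x) :
    (Measure.pi fun _ : ι => μ).map (fun w => ⨆ i, w i) =
      (volume.restrict (Ioi 0)).withDensity fun x =>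
        ENNReal.ofReal (maxDensity (Fintype.card ι) F f x) := by
  have hF_nonneg : ∀ x, 0 ≤ F x := fun x => hcdf x ▸ measureReal_nonneg
  have hmax : Measurable fun w : ι → ℝ => ⨆ i, w i := .iSup fun i => measurable_pi_apply i
  have : IsProbabilityMeasure ((Measure.pi fun _ : ι => μ).map fun w => ⨆ i, w i) :=
    Measure.isProbabilityMeasure_map hmax.aemeasurable
  refine eq_withDensity_of_hasDerivAt_cdf (G := fun x => F x ^ Fintype.card ι) (fun x => ?_)
    (by simp [hF0]) (fun x hx => (hderiv x hx).pow_maxDensity _)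
    fun x hx => maxDensity_nonneg (hF_nonneg x) (hf x hx)
  rw [map_iSup_pi_apply_Iic, ← ofReal_measureReal, hcdf, ENNReal.ofReal_pow (hF_nonneg x)]

lemma fstarS_succ_eq_integral (μ : Measure ℝ) [IsProbabilityMeasure μ] (m : ℕ) [NeZero m]
    (hm : 0 < m + 1) (p q : ℝ) :
    FstarS μ (m + 1) hm p q =
      ∫ w, μ.real (Iio ((⨆ k, w k) + (q - p))) ∂Measure.pi fun _ : Fin m => μ := by
  set S : Set (ℝ × (Fin m → ℝ)) := {z | z.1 < (⨆ k, z.2 k) + (q - p)}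
  have hmax : Measurable fun w : Fin m → ℝ => ⨆ k, w k := .iSup fun k => measurable_pi_apply k
  have hS : MeasurableSet S :=
    measurableSet_lt measurable_fst ((hmax.comp measurable_snd).add_const _)
  have hevent : {v : Fin (m + 1) → ℝ | v (Fin.last m) - q <
      ⨆ j : {j : Fin (m + 1) // j ≠ Fin.last m}, (v j.1 - p)} =
      MeasurableEquiv.piFinSuccAbove (fun _ => ℝ) (Fin.last m) ⁻¹' S := by
    ext v
    have hsup : ⨆ j : {j : Fin (m + 1) // j ≠ Fin.last m}, (v j.1 - p) =
        (⨆ k, v (Fin.castSucc k)) - p := by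
      rw [← (finSuccAboveEquiv (Fin.last m)).iSup_comp]
      simp only [finSuccAboveEquiv_apply, Fin.succAbove_last, sub_eq_add_neg]
      exact ((OrderIso.addRight (-p)).map_ciSup
        (finite_range fun k => v (Fin.castSucc k)).bddAbove).symm
    simp only [S, hsup, mem_ofPred_eq, mem_preimage,
      MeasurableEquiv.piFinSuccAbove_apply, Fin.insertNthEquiv_symm_apply, Fin.removeNth,
      Fin.succAbove_last]
    constructor <;> intro h <;> linarith
  have hmono : Monotone fun t => μ (Iio t) := fun _ _ h => measure_mono (Iio_subset_Iio h)
  -- the index `⟨m + 1 - 1, _⟩` in `FstarS` is `Fin.last m` by reduction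
  change ((Measure.pi fun _ => μ) {v : Fin (m + 1) → ℝ | v (Fin.last m) - q <
      ⨆ j : {j : Fin (m + 1) // j ≠ Fin.last m}, (v j.1 - p)}).toReal = _
  rw [hevent, (measurePreserving_piFinSuccAbove _ (Fin.last m)).measure_preimage
    hS.nullMeasurableSet, Measure.prod_apply_symm hS, ← integral_toReal]
  · rfl
  · exact (hmono.measurable.comp (hmax.add_const _)).aemeasurable
  · exact ae_of_all _ fun _ => measure_lt_top μ _

lemma setIntegral_Ioi_comp_add_right {E : Type*} [NormedAddCommGroup E] [NormedSpace ℝ E]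
    (h : ℝ → E) (a c : ℝ) : ∫ x in Ioi a, h (x + c) = ∫ x in Ioi (a + c), h x := by
  have := (measurePreserving_add_right volume c).setIntegral_preimage_emb
    (measurableEmbedding_addRight c) h (Ioi (a + c))
  rwa [preimage_add_const_Ioi, add_sub_cancel_right] at this

section

variable {μ : Measure ℝ} [IsProbabilityMeasure μ] {F f : ℝ → ℝ}

lemma fstarS_succ_eq_setIntegral_Ioi_zero (hcdf : ∀ x, μ.real (Iic x) = F x) (hF0 : F 0 = 0)
    (hcont : Continuous F) (hderiv : ∀ x ∈ Ici 0, HasDerivAt F (f x) x)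
    (hf : ∀ x ∈ Ici 0, 0 ≤ f x) (m : ℕ) [NeZero m] (hm : 0 < m + 1) (p q : ℝ) :
    FstarS μ (m + 1) hm p q = ∫ y in Ioi 0, F (y + (q - p)) * maxDensity m F f y := by
  have hmax : Measurable fun w : Fin m → ℝ => ⨆ k, w k := .iSup fun k => measurable_pi_apply k
  have hmono : Monotone fun t => μ.real (Iio t) := fun _ _ h =>
    measureReal_mono (Iio_subset_Iio h)
  have hf_meas : AEMeasurable f (volume.restrict (Ioi 0)) :=
    (measurable_deriv F).aemeasurable.congr (ae_restrict_of_forall_mem measurableSet_Ioi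
      fun x hx => (hderiv x (mem_Ici.2 (le_of_lt hx))).deriv)
  have hdens : AEMeasurable (fun x => ENNReal.ofReal (maxDensity m F f x))
      (volume.restrict (Ioi 0)) :=
    ((aemeasurable_const.mul hf_meas).mul
      (hcont.measurable.pow_const _).aemeasurable).ennreal_ofReal
  rw [fstarS_succ_eq_integral, ← integral_map (f := fun y => μ.real (Iio (y + (q - p))))
    hmax.aemeasurable (hmono.measurable.comp (measurable_add_const _)).aestronglyMeasurable,
    map_iSup_pi_eq_withDensity hcdf hF0 hderiv hf, Fintype.card_fin]
  rw [integral_withDensity_eq_integral_toReal_smul₀ hdens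
    (ae_of_all _ fun _ => ENNReal.ofReal_lt_top)]
  refine setIntegral_congr_fun measurableSet_Ioi fun y hy => ?_
  rw [ENNReal.toReal_ofReal (maxDensity_nonneg (hcdf y ▸ measureReal_nonneg) (hf y hy.out.le)),
    smul_eq_mul, measureReal_Iio_eq_of_continuous_cdf hcdf hcont, mul_comm]

lemma fstarS_succ_eq_setIntegral (hcdf : ∀ x, μ.real (Iic x) = F x) (hsupp : ∀ x ≤ 0, F x = 0)
    (hcont : Continuous F) (hderiv : ∀ x ∈ Ici 0, HasDerivAt F (f x) x)
    (hf : ∀ x ∈ Ici 0, 0 ≤ f x) (m : ℕ) [NeZero m] (hm : 0 < m + 1) (p q : ℝ) :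
    FstarS μ (m + 1) hm p q =
      ∫ x in Ioi (max 0 (q - p)), F x * maxDensity m F f (x - (q - p)) := by
  have hshift := setIntegral_Ioi_comp_add_right
    (fun x => F x * maxDensity m F f (x - (q - p))) 0 (q - p)
  simp only [add_sub_cancel_right, zero_add] at hshift
  rw [fstarS_succ_eq_setIntegral_Ioi_zero hcdf (hsupp 0 le_rfl) hcont hderiv hf, hshift]
  refine setIntegral_eq_of_subset_of_forall_sdiff_eq_zero measurableSet_Ioi
    (Ioi_subset_Ioi (le_max_right _ _)) fun x hx => ?_
  have hx0 : x ≤ 0 := by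
    simp only [Set.mem_sdiff, mem_Ioi, not_lt, le_max_iff] at hx
    rcases hx with ⟨hx, h | h⟩
    · exact h
    · linarith
  rw [hsupp x hx0, zero_mul]

end

lemma one_sub_setIntegral_mul_maxDensity {F f : ℝ → ℝ} (hcont : Continuous F)
    (hF : ∀ x, F x ∈ Icc 0 1) (hderiv : ∀ x ∈ Ici 0, HasDerivAt F (f x) x)
    (hf : ∀ x ∈ Ici 0, 0 ≤ f x) (hlim : Tendsto F atTop (nhds 1)) (m : ℕ) {a c : ℝ}
    (hca : c ≤ a) :
    1 - ∫ x in Ioi a, F x * maxDensity m F f (x - c) =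
      (∫ x in Ioi a, (1 - F x) * maxDensity m F f (x - c)) + F (a - c) ^ m := by
  have hderiv' : ∀ x ∈ Ici a,
      HasDerivAt (fun x => F (x - c) ^ m) (maxDensity m F f (x - c)) x := fun x hx =>
    ((hderiv _ (mem_Ici.2 (by linarith [mem_Ici.1 hx]))).pow_maxDensity m).comp_sub_const x c
  have hnonneg : ∀ x ∈ Ioi a, 0 ≤ maxDensity m F f (x - c) := fun x hx =>
    maxDensity_nonneg (hF (x - c)).1 (hf _ (mem_Ici.2 (by linarith [mem_Ioi.1 hx])))
  have hlim' : Tendsto (fun x => F (x - c) ^ m) atTop (nhds 1) := by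
    simpa [sub_eq_add_neg] using
      (hlim.comp (tendsto_atTop_add_const_right atTop (-c) tendsto_id)).pow m
  have hint := integrableOn_Ioi_deriv_of_nonneg' hderiv' hnonneg hlim'
  have hint' : IntegrableOn (fun x => F x * maxDensity m F f (x - c)) (Ioi a) :=
    hint.bdd_mul hcont.aestronglyMeasurable (c := 1) (ae_of_all _ fun x => by
      rw [Real.norm_eq_abs, abs_of_nonneg (hF x).1]
      exact (hF x).2)
  simp_rw [sub_mul, one_mul]
  rw [integral_sub hint hint', integral_Ioi_of_hasDerivAt_of_nonneg' hderiv' hnonneg hlim']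
  ring

/-- Proposition 3.2 (first two bullets): with `g_p(q,x) = (n-1)·f(x-q+p)·F(x-q+p)^{n-2}` and
`M = max{0, q-p}`, we have `F*_p(q) = ∫_M^∞ F(x)·g_p(q,x) dx` and
`1 - F*_p(q) = ∫_M^∞ (1-F(x))·g_p(q,x) dx + F(M+p-q)^{n-1}`. -/
theorem star_cdf_formula
    (n : ℕ) (hn : 2 ≤ n) (p q : ℝ)
    (μ : Measure ℝ) [IsProbabilityMeasure μ]
    (F f : ℝ → ℝ)
    (hcdf : ∀ x, (μ (Iic x)).toReal = F x)
    (hsupp : ∀ x ≤ (0:ℝ), F x = 0)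
    (hcont : Continuous F)
    (hlim : Tendsto F atTop (nhds 1))
    (hderiv : ∀ x ∈ Ici (0:ℝ), HasDerivAt F (f x) x)
    (hfnonneg : ∀ x ∈ Ici (0:ℝ), 0 ≤ f x) :
    FstarS μ n (by omega) p q =
      (∫ x in Ioi (max 0 (q - p)),
        F x * (((n:ℝ) - 1) * f (x - q + p) * F (x - q + p) ^ (n - 2))) ∧
    1 - FstarS μ n (by omega) p q =
      (∫ x in Ioi (max 0 (q - p)),
        (1 - F x) * (((n:ℝ) - 1) * f (x - q + p) * F (x - q + p) ^ (n - 2))) +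
        F (max 0 (q - p) + p - q) ^ (n - 1) := by
  obtain ⟨m, rfl⟩ : ∃ m, n = m + 1 := ⟨n - 1, by omega⟩
  have : NeZero m := ⟨by omega⟩
  have hF : ∀ x, F x ∈ Icc 0 1 := fun x => hcdf x ▸ ⟨measureReal_nonneg, measureReal_le_one⟩
  have hFstar := fstarS_succ_eq_setIntegral hcdf hsupp hcont hderiv hfnonneg m (by omega) p q
  have hm : m + 1 - 2 = m - 1 := by omega
  simp only [Nat.cast_add_one, add_sub_cancel_right, Nat.add_sub_cancel, hm, sub_add,
    ← sub_sub_eq_add_sub]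
  refine ⟨hFstar, ?_⟩
  rw [hFstar, one_sub_setIntegral_mul_maxDensity hcont hF hderiv hfnonneg hlim m
    (le_max_right _ _)]
  rfl
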